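/- Let l > 0, α ∈ [0,1], and define w^α : [−l/2, l/2] → ℝ as the odd function given for x ∈ [0, l/2] by w^α(x) = x for 0 ≤ x ≤ α² l/2 and w^α(x) = (α l/2)·(1 − (1 − x/(l/2))²/(1−α²))^{1/2} for α² l/2 < x ≤ l/2. Then ∫_{−l/2}^{l/2} (w^α)² dx = (l³/12)·α²(2−α²) and ∫_{−l/2}^{l/2} (w^α)'² (w^α)² dx = (l³/12)·α⁴. -/

import Mathlib

open MeasureTheory

/-- The odd profile `w^α` on `[-l/2, l/2]`. -/
noncomputable def wA (l α x : ℝ) : ℝ :=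
  if 0 ≤ x then
    (if x ≤ α ^ 2 * l / 2 then x
      else α * l / 2 * Real.sqrt (1 - (1 - x / (l / 2)) ^ 2 / (1 - α ^ 2)))
  else
    -(if -x ≤ α ^ 2 * l / 2 then -x
      else α * l / 2 * Real.sqrt (1 - (1 - (-x) / (l / 2)) ^ 2 / (1 - α ^ 2)))

/-!
`w^α` is odd, so both integrands are even and it suffices to integrate over `[0, l/2]`.
On `[0, α²l/2]` we have `w = x` and `w' = 1`. On the outer piece `(w^α)²` is a quadratic
polynomial in `l/2 - x`, and `w w' = (w²)'/2 = α²(l/2 - x)/(1 - α²)` is linear, so both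
integrands are piecewise polynomials. For `α = 1` the outer piece is empty.
-/

open Set intervalIntegral

theorem Function.Odd.deriv_even {𝕜 F : Type*} [NontriviallyNormedField 𝕜]
    [NormedAddCommGroup F] [NormedSpace 𝕜 F] {f : 𝕜 → F} (hf : f.Odd) : (deriv f).Even := by
  intro x
  have h := deriv_comp_neg (f := f) (x := x)
  rw [show (fun y => f (-y)) = -f from funext hf, deriv.neg] at h
  exact (neg_inj.1 h).symm

section EvenIntegral

variable {E : Type*} [NormedAddCommGroup E] [NormedSpace ℝ E]

theorem Function.Even.integral_neg_eq_two_nsmul {f : ℝ → E} (hf : f.Even) {a : ℝ}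
    (h : IntervalIntegrable f volume 0 a) : ∫ x in -a..a, f x = 2 • ∫ x in 0..a, f x := by
  have h' : IntervalIntegrable f volume (-a) 0 := by
    simpa [hf.eq] using ((IntervalIntegrable.iff_comp_neg).1 h).symm
  have hleft : ∫ x in -a..0, f x = ∫ x in 0..a, f x := by
    simpa [hf.eq] using (integral_comp_neg (a := 0) (b := a) f).symm
  rw [← integral_add_adjacent_intervals h' h, hleft, two_nsmul]

theorem Function.Even.integral_eq_of_eqOn_Ioo {f p q : ℝ → E} (hf : f.Even) {a L : ℝ}
    (ha : 0 ≤ a) (haL : a ≤ L) (hp : Continuous p) (hq : Continuous q)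
    (hfp : EqOn f p (Ioo 0 a)) (hfq : EqOn f q (Ioo a L)) :
    ∫ x in -L..L, f x = 2 • ((∫ x in 0..a, p x) + ∫ x in a..L, q x) := by
  rw [← uIoo_of_le ha] at hfp
  rw [← uIoo_of_le haL] at hfq
  have hfp' := (intervalIntegrable_congr_uIoo hfp).2 (hp.intervalIntegrable (μ := volume) 0 a)
  have hfq' := (intervalIntegrable_congr_uIoo hfq).2 (hq.intervalIntegrable (μ := volume) a L)
  rw [hf.integral_neg_eq_two_nsmul (hfp'.trans hfq'), ← integral_add_adjacent_intervals hfp' hfq',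
    integral_congr_uIoo hfp, integral_congr_uIoo hfq]

end EvenIntegral

theorem integral_endpoint_sub_sq (a b : ℝ) : ∫ x in a..b, (b - x) ^ 2 = (b - a) ^ 3 / 3 := by
  norm_num [integral_comp_sub_left (fun x => x ^ 2)]

section Profile

variable {l α x : ℝ}

theorem wA_odd (hl : 0 ≤ l) : (wA l α).Odd := by
  have ha : 0 ≤ α ^ 2 * l / 2 := by positivity
  intro x
  rcases lt_trichotomy x 0 with hx | rfl | hx
  · simp [wA, hx.le, not_le.2 hx]
  · simp [wA, ha]
  · simp [wA, hx.le, not_le.2 (neg_lt_zero.2 hx)]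

theorem wA_eq_self (hx : x ∈ Icc 0 (α ^ 2 * l / 2)) : wA l α x = x := by
  rw [wA, if_pos hx.1, if_pos hx.2]

theorem deriv_wA_eq_one (hx : x ∈ Ioo 0 (α ^ 2 * l / 2)) : deriv (wA l α) x = 1 := by
  have h : wA l α =ᶠ[nhds x] id :=
    Filter.eventuallyEq_of_mem (isOpen_Ioo.mem_nhds hx) fun _ hy =>
      wA_eq_self (Ioo_subset_Icc_self hy)
  rw [h.deriv_eq, deriv_id]

noncomputable def wARadicand (l α x : ℝ) : ℝ := 1 - (1 - x / (l / 2)) ^ 2 / (1 - α ^ 2)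

theorem wA_eq_mul_sqrt_wARadicand (hl : 0 < l) (hx : α ^ 2 * l / 2 < x) :
    wA l α x = α * l / 2 * √(wARadicand l α x) := by
  have ha : 0 ≤ α ^ 2 * l / 2 := by positivity
  rw [wA, if_pos (ha.trans hx.le), if_neg (not_le.2 hx), wARadicand]

theorem wARadicand_pos (hl : 0 < l) (hx : x ∈ Ioo (α ^ 2 * l / 2) (l / 2)) :
    0 < wARadicand l α x := by
  obtain ⟨hax, hxL⟩ := hx
  have hγ : 0 < 1 - α ^ 2 := by nlinarith
  have ht : 0 < 1 - x / (l / 2) := by rw [sub_pos, div_lt_one (by positivity)]; exact hxL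
  have htγ : 1 - x / (l / 2) < 1 - α ^ 2 := by
    rw [sub_lt_sub_iff_left, lt_div_iff₀ (by positivity)]; linarith
  rw [wARadicand, sub_pos, div_lt_one hγ]
  nlinarith

theorem hasDerivAt_wARadicand :
    HasDerivAt (wARadicand l α) (2 * (1 - x / (l / 2)) / (l / 2) / (1 - α ^ 2)) x := by
  have h : HasDerivAt (fun y : ℝ => 1 - y / (l / 2)) (-(1 / (l / 2))) x := by
    simpa using ((hasDerivAt_id x).div_const (l / 2)).const_sub 1
  refine (((h.pow 2).div_const (1 - α ^ 2)).const_sub 1).congr_deriv ?_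
  ring

theorem wA_sq_of_mem_Ioo (hl : 0 < l) (hx : x ∈ Ioo (α ^ 2 * l / 2) (l / 2)) :
    wA l α x ^ 2 = (α * l / 2) ^ 2 - α ^ 2 / (1 - α ^ 2) * (l / 2 - x) ^ 2 := by
  rw [wA_eq_mul_sqrt_wARadicand hl hx.1, mul_pow, Real.sq_sqrt (wARadicand_pos hl hx).le,
    wARadicand]
  field_simp

theorem deriv_wA_mul_wA_of_mem_Ioo (hl : 0 < l) (hx : x ∈ Ioo (α ^ 2 * l / 2) (l / 2)) :
    deriv (wA l α) x * wA l α x = α ^ 2 / (1 - α ^ 2) * (l / 2 - x) := by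
  have hs := wARadicand_pos hl hx
  have h : wA l α =ᶠ[nhds x] fun y => α * l / 2 * √(wARadicand l α y) :=
    Filter.eventuallyEq_of_mem (Ioi_mem_nhds hx.1) fun y hy => wA_eq_mul_sqrt_wARadicand hl hy
  rw [h.deriv_eq, ((hasDerivAt_wARadicand.sqrt hs.ne').const_mul _).deriv,
    wA_eq_mul_sqrt_wARadicand hl hx.1]
  have hS := (Real.sqrt_pos.2 hs).ne'
  have := hl.ne'
  field_simp

end Profile

theorem stmt12 (l α : ℝ) (hl : 0 < l) (hα : α ∈ Set.Icc (0 : ℝ) 1) :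
    (∫ x in (-(l/2))..(l/2), (wA l α x) ^ 2) = l ^ 3 / 12 * (α ^ 2 * (2 - α ^ 2)) ∧
    (∫ x in (-(l/2))..(l/2), (deriv (wA l α) x) ^ 2 * (wA l α x) ^ 2)
      = l ^ 3 / 12 * α ^ 4 := by
  have ha : 0 ≤ α ^ 2 * l / 2 := by positivity
  have haL : α ^ 2 * l / 2 ≤ l / 2 := by nlinarith [pow_le_one₀ hα.1 hα.2 (n := 2)]
  have hodd := wA_odd (α := α) hl.le
  have hsq_even : (fun x => wA l α x ^ 2).Even := fun x => by simp only [hodd.eq, neg_sq]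
  have hprod_even : (fun x => deriv (wA l α) x ^ 2 * wA l α x ^ 2).Even := fun x => by
    simp only [hodd.deriv_even.eq, hodd.eq, neg_sq]
  -- also for `α = 1`, where `α ^ 2 / (1 - α ^ 2)` is the junk value `0`
  have hβ : α ^ 2 / (1 - α ^ 2) * (1 - α ^ 2) ^ 2 = α ^ 2 * (1 - α ^ 2) := by
    rcases eq_or_ne (1 - α ^ 2) 0 with h | h
    · simp [h]
    · field_simp
  constructor
  · rw [hsq_even.integral_eq_of_eqOn_Ioo ha haL (p := fun x => x ^ 2)
      (q := fun x => (α * l / 2) ^ 2 - α ^ 2 / (1 - α ^ 2) * (l / 2 - x) ^ 2)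
      (by fun_prop) (by fun_prop) (fun x hx => by simp only [wA_eq_self (Ioo_subset_Icc_self hx)])
      (fun x hx => wA_sq_of_mem_Ioo hl hx), intervalIntegral.integral_sub (by simp)
      (Continuous.intervalIntegrable (by fun_prop) _ _)]
    simp [integral_endpoint_sub_sq]
    linear_combination (-2 / 3 * (l / 2) ^ 3 * (1 - α ^ 2)) * hβ
  · rw [hprod_even.integral_eq_of_eqOn_Ioo ha haL (p := fun x => x ^ 2)
      (q := fun x => (α ^ 2 / (1 - α ^ 2)) ^ 2 * (l / 2 - x) ^ 2) (by fun_prop) (by fun_prop)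
      (fun x hx => by simp [deriv_wA_eq_one hx, wA_eq_self (Ioo_subset_Icc_self hx)])
      (fun x hx => by simp only [← mul_pow, deriv_wA_mul_wA_of_mem_Ioo hl hx])]
    simp [integral_endpoint_sub_sq]
    linear_combination (2 / 3 * (l / 2) ^ 3 * (α ^ 2 / (1 - α ^ 2) * (1 - α ^ 2) + α ^ 2)) * hβ
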